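/- arXiv:2212.05104 — 3 statements merged into one kernel-verified Lean document; each statement's English description precedes it below -/
import Mathlib

section
/- Let A, B be symmetric n×n real matrices with eigenvalues λ₁ ≤ ... ≤ λₙ and μ₁ ≤ ... ≤ μₙ respectively. Then tr(AB) ≤ Σᵢ λᵢμᵢ. -/
/-!
Write `A = U diag(λ) Uᵀ` and `B = V diag(μ) Vᵀ`. With the orthogonal matrix `W = Uᵀ V`,
`tr(AB) = ∑ᵢⱼ λᵢ μⱼ Wᵢⱼ²`, and `(Wᵢⱼ²)` is doubly stochastic because the rows and columns of `W`
are unit vectors. By Birkhoff's theorem it is a convex combination of permutation matrices, and for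
a permutation `σ` the rearrangement inequality gives `∑ᵢ λᵢ μ_{σ i} ≤ ∑ᵢ λᵢ μᵢ`.
-/

open Matrix

namespace Matrix

variable {ι R : Type*} [Fintype ι] [DecidableEq ι]

theorem hadamard_self_mem_doublyStochastic_of_mem_orthogonalGroup
    [CommRing R] [LinearOrder R] [IsStrictOrderedRing R] {W : Matrix ι ι R}
    (hW : W ∈ orthogonalGroup ι R) : W ⊙ W ∈ doublyStochastic R ι := by
  have hrows : W * Wᵀ = 1 := by simpa using (mem_orthogonalGroup_iff ι R).mp hW
  have hcols : Wᵀ * W = 1 := by simpa using (mem_orthogonalGroup_iff' ι R).mp hW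
  refine mem_doublyStochastic_iff_sum.mpr ⟨fun i j => mul_self_nonneg (W i j), fun i => ?_,
    fun j => ?_⟩
  · simpa [mul_apply] using congr_fun₂ hrows i i
  · simpa [mul_apply] using congr_fun₂ hcols j j

theorem trace_diagonal_mul_mul_diagonal_mul_transpose [CommSemiring R] (a b : ι → R)
    (W : Matrix ι ι R) :
    (diagonal a * W * diagonal b * Wᵀ).trace = a ⬝ᵥ (W ⊙ W) *ᵥ b := by
  simp only [trace, diag, mul_apply (M := diagonal a * W * diagonal b), mul_diagonal,
    diagonal_mul, transpose_apply, dotProduct, mulVec, hadamard_apply, Finset.mul_sum]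
  refine Finset.sum_congr rfl fun i _ => Finset.sum_congr rfl fun j _ => ?_
  ring

theorem dotProduct_mulVec_le_dotProduct_of_mem_doublyStochastic [Field R] [LinearOrder R]
    [IsStrictOrderedRing R] {a b : ι → R} (hab : Monovary a b) {M : Matrix ι ι R}
    (hM : M ∈ doublyStochastic R ι) : a ⬝ᵥ M *ᵥ b ≤ a ⬝ᵥ b := by
  obtain ⟨w, hw_nonneg, hw_sum, rfl⟩ := exists_eq_sum_perm_of_mem_doublyStochastic hM
  have hperm (σ : Equiv.Perm ι) : a ⬝ᵥ σ.permMatrix R *ᵥ b ≤ a ⬝ᵥ b := by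
    simpa [permMatrix_mulVec, dotProduct] using hab.sum_mul_comp_perm_le_sum_mul (σ := σ)
  calc a ⬝ᵥ (∑ σ, w σ • σ.permMatrix R) *ᵥ b
      = ∑ σ, w σ * (a ⬝ᵥ σ.permMatrix R *ᵥ b) := by
        simp [Matrix.sum_mulVec, dotProduct_sum, smul_mulVec, dotProduct_smul]
    _ ≤ ∑ σ, w σ * (a ⬝ᵥ b) := by gcongr with σ; exacts [hw_nonneg σ, hperm σ]
    _ = a ⬝ᵥ b := by rw [← Finset.sum_mul, hw_sum, one_mul]

end Matrix

theorem symmetric_von_neumann_trace_inequality {n : ℕ}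
    (A B : Matrix (Fin n) (Fin n) ℝ) (lam mu : Fin n → ℝ)
    (hlam : Monotone lam) (hmu : Monotone mu)
    (hA : ∃ U ∈ Matrix.orthogonalGroup (Fin n) ℝ, A = U * Matrix.diagonal lam * Uᵀ)
    (hB : ∃ U ∈ Matrix.orthogonalGroup (Fin n) ℝ, B = U * Matrix.diagonal mu * Uᵀ) :
    (A * B).trace ≤ ∑ i, lam i * mu i := by
  obtain ⟨U, hU, rfl⟩ := hA
  obtain ⟨V, hV, rfl⟩ := hB
  have hW : Uᵀ * V ∈ orthogonalGroup (Fin n) ℝ :=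
    mul_mem (transpose_mem_unitaryGroup_iff.mpr hU) hV
  have htrace : (U * diagonal lam * Uᵀ * (V * diagonal mu * Vᵀ)).trace
      = (diagonal lam * (Uᵀ * V) * diagonal mu * (Uᵀ * V)ᵀ).trace := by
    rw [transpose_mul, transpose_transpose, Matrix.mul_assoc U, Matrix.mul_assoc U,
      trace_mul_comm]
    simp only [Matrix.mul_assoc]
  rw [htrace, trace_diagonal_mul_mul_diagonal_mul_transpose]
  exact dotProduct_mulVec_le_dotProduct_of_mem_doublyStochastic (hlam.monovary hmu)
    (hadamard_self_mem_doublyStochastic_of_mem_orthogonalGroup hW)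
end

section
/- Let A be an invertible d×d real matrix such that the off-diagonal entries of AAᵀ are nonpositive and AAᵀ is irreducible (not permutation-similar to a block-diagonal matrix with more than one block). Then (AAᵀ)⁻¹ has all entries strictly positive. -/
/-!
`A * Aᵀ` is positive definite, and a positive definite matrix `M` with nonpositive off-diagonal
entries is monotone: `0 ≤ M x` forces `0 ≤ x`, because the negative part satisfies
`x⁻ ⬝ M x⁻ = x⁻ ⬝ M x⁺ - x⁻ ⬝ M x ≤ 0`. So every column `x = M⁻¹ eⱼ` is nonnegative, with
`xⱼ = x ⬝ M x > 0`. On a row `a ≠ j` with `x a = 0`, the equation `(M x) a = 0` is a sum of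
nonpositive terms `M a b * x b`, so `M a b = 0` whenever `x b ≠ 0`: the zero set of `x` is
disconnected from its complement, hence empty by irreducibility.
-/

open Matrix

namespace Matrix

variable {ι : Type*} [Fintype ι] {M : Matrix ι ι ℝ}

theorem dotProduct_mulVec_nonpos_of_offDiag_nonpos (hoff : ∀ i j, i ≠ j → M i j ≤ 0)
    {u v : ι → ℝ} (hu : 0 ≤ u) (hv : 0 ≤ v) (huv : ∀ k, u k * v k = 0) :
    u ⬝ᵥ (M *ᵥ v) ≤ 0 := by
  simp only [dotProduct, mulVec, Finset.mul_sum]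
  refine Finset.sum_nonpos fun i _ => Finset.sum_nonpos fun k _ => ?_
  obtain rfl | hik := eq_or_ne i k
  · rw [mul_left_comm, huv, mul_zero]
  · rw [mul_left_comm]
    exact mul_nonpos_of_nonpos_of_nonneg (hoff i k hik) (mul_nonneg (hu i) (hv k))

theorem PosDef.nonneg_of_nonneg_mulVec (hM : M.PosDef) (hoff : ∀ i j, i ≠ j → M i j ≤ 0)
    {x : ι → ℝ} (hx : 0 ≤ M *ᵥ x) : 0 ≤ x := by
  have hdisj : ∀ k, x⁻ k * x⁺ k = 0 := fun k => by
    rcases le_total (x k) 0 with h | h <;> simp [h]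
  have hquad : x⁻ ⬝ᵥ (M *ᵥ x⁻) ≤ 0 := by
    have hsplit : x⁻ = x⁺ - x :=
      eq_sub_of_add_eq (sub_eq_iff_eq_add'.mp (posPart_sub_negPart x)).symm
    calc x⁻ ⬝ᵥ (M *ᵥ x⁻) = x⁻ ⬝ᵥ (M *ᵥ (x⁺ - x)) := by rw [← hsplit]
      _ = x⁻ ⬝ᵥ (M *ᵥ x⁺) - x⁻ ⬝ᵥ (M *ᵥ x) := by rw [mulVec_sub, dotProduct_sub]
      _ ≤ 0 - 0 := sub_le_sub
          (dotProduct_mulVec_nonpos_of_offDiag_nonpos hoff (negPart_nonneg x)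
            (posPart_nonneg x) hdisj)
          (dotProduct_nonneg_of_nonneg (negPart_nonneg x) hx)
      _ = 0 := sub_zero 0
  by_contra hneg
  have hne : x⁻ ≠ 0 := fun h => hneg (negPart_eq_zero.mp h)
  exact hquad.not_gt (by simpa using hM.dotProduct_mulVec_pos hne)

theorem mul_apply_eq_zero_of_mulVec_apply_eq_zero (hoff : ∀ i j, i ≠ j → M i j ≤ 0)
    {x : ι → ℝ} (hx : 0 ≤ x) {a : ι} (hxa : x a = 0) (hMxa : (M *ᵥ x) a = 0) (b : ι) :
    M a b * x b = 0 := by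
  have hterm : ∀ k ∈ Finset.univ, M a k * x k ≤ 0 := fun k _ => by
    obtain rfl | hak := eq_or_ne a k
    · simp [hxa]
    · exact mul_nonpos_of_nonpos_of_nonneg (hoff a k hak) (hx k)
  exact (Finset.sum_eq_zero_iff_of_nonpos hterm).mp hMxa b (Finset.mem_univ b)

theorem PosDef.inv_apply_pos_of_irreducible [DecidableEq ι] (hM : M.PosDef)
    (hoff : ∀ i j, i ≠ j → M i j ≤ 0)
    (hirr : ∀ S : Set ι, S.Nonempty → S ≠ Set.univ → ∃ i ∈ S, ∃ j ∈ Sᶜ, M i j ≠ 0)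
    (i j : ι) : 0 < M⁻¹ i j := by
  set x := M⁻¹ *ᵥ Pi.single j 1 with hx_def
  have hx_apply : ∀ k, x k = M⁻¹ k j := fun k => by simp [hx_def]
  have hMx : M *ᵥ x = Pi.single j 1 := by
    rw [hx_def, mulVec_mulVec, mul_nonsing_inv _ ((isUnit_iff_isUnit_det M).mp hM.isUnit),
      one_mulVec]
  have hx_nonneg : 0 ≤ x :=
    hM.nonneg_of_nonneg_mulVec hoff (hMx ▸ Pi.single_nonneg.mpr zero_le_one)
  have hxj : 0 < x j := by
    have hx_ne : x ≠ 0 := fun h => by simpa [h] using congrFun hMx j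
    simpa [hMx] using hM.dotProduct_mulVec_pos hx_ne
  rw [← hx_apply]
  by_contra! hxi
  obtain ⟨a, hxa, b, hxb, hMab⟩ := hirr {k | x k = 0} ⟨i, le_antisymm hxi (hx_nonneg i)⟩
    (fun h => hxj.ne' (h ▸ Set.mem_univ j : j ∈ {k | x k = 0}))
  have haj : a ≠ j := by rintro rfl; exact hxj.ne' hxa
  have hMxa : (M *ᵥ x) a = 0 := by simp [hMx, haj]
  have hMxb := mul_apply_eq_zero_of_mulVec_apply_eq_zero hoff hx_nonneg hxa hMxa b
  exact hMab ((mul_eq_zero.mp hMxb).resolve_right hxb)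

end Matrix

theorem inverse_of_irreducible_Z_gram_is_positive {d : ℕ}
    (A : Matrix (Fin d) (Fin d) ℝ) (hA : IsUnit A.det)
    (hoff : ∀ i j, i ≠ j → (A * Aᵀ) i j ≤ 0)
    (hirr : ∀ S : Set (Fin d), S.Nonempty → S ≠ Set.univ →
      ∃ i ∈ S, ∃ j ∈ Sᶜ, (A * Aᵀ) i j ≠ 0) :
    ∀ i j, 0 < (A * Aᵀ)⁻¹ i j := by
  have hpos : (A * Aᵀ).PosDef := by
    simpa [conjTranspose_eq_transpose_of_trivial] using PosDef.mul_conjTranspose_self A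
      (vecMul_injective_of_isUnit ((isUnit_iff_isUnit_det A).mpr hA))
  exact hpos.inv_apply_pos_of_irreducible hoff hirr
end

section
/- Let M be a d×d real symmetric matrix whose eigenvalues satisfy λ_{d-k+1}(M) = -λ_k(M) for all k (spectrum symmetric about 0), and assume each principal (d-1)×(d-1) submatrix M^{(j)} also has spectrum symmetric about 0. If the top and bottom eigenvalues of M are simple, then the corresponding unit eigenvectors v₁ and v_d satisfy (v₁)ⱼ² = (v_d)ⱼ² for every j ∈ [d]. -/
open Matrix Polynomial

/-!
If `λ` is a simple eigenvalue of a real symmetric matrix `A` with unit eigenvector `v`, then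
diagonalising `A` gives `adj(λ - A)_{jj} = v_j² ∏_{μ ≠ λ} (λ - μ)`, while cofactor expansion gives
`adj(λ - A)_{jj} = χ_{A^{(j)}}(λ)`; this is the eigenvector–eigenvalue identity.
A monic split polynomial whose roots are symmetric about `0` satisfies `p(-x) = (-1)^{deg p} p(x)`.
Since the bottom eigenvalue of `M` is `-λ₁`, applying this to every `χ_{M^{(j)}}` and to the
product over the remaining eigenvalues of `M` shows that the identities at `λ₁` and at `-λ₁`
differ by the same nonzero factor `(-1)^d`, so `(v₁)_j² = (v_d)_j²`.
-/

theorem Multiset.prod_map_neg_map_neg_sub {R : Type*} [CommRing R] (s : Multiset R) (x : R) :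
    ((s.map (fun r => -r)).map (fun r => -x - r)).prod =
      (-1) ^ card s * (s.map (fun r => x - r)).prod := by
  have h : (fun r => -x - r) ∘ (fun r => -r) = Neg.neg ∘ (fun r => x - r) := by
    funext r
    simp only [Function.comp_apply]
    ring
  rw [map_map, h, ← map_map, prod_map_neg, card_map]

theorem Multiset.prod_map_sub_erase_neg_of_map_neg_eq {R : Type*} [CommRing R] [DecidableEq R]
    {s : Multiset R} (hs : s.map (fun r => -r) = s) (x : R) :
    ((s.erase (-x)).map (fun r => -x - r)).prod =
      (-1) ^ card (s.erase x) * ((s.erase x).map (fun r => x - r)).prod := by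
  rw [← prod_map_neg_map_neg_sub, map_erase _ neg_injective, hs]

theorem Polynomial.Monic.eval_neg_of_roots_map_neg {R : Type*} [CommRing R] [IsDomain R]
    {p : R[X]} (hm : p.Monic) (hp : p.Splits) (hr : p.roots.map (fun r => -r) = p.roots)
    (x : R) : p.eval (-x) = (-1) ^ p.natDegree * p.eval x := by
  rw [hp.eval_eq_prod_roots_of_monic hm, hp.eval_eq_prod_roots_of_monic hm,
    hp.natDegree_eq_card_roots]
  conv_lhs => rw [← hr]
  exact Multiset.prod_map_neg_map_neg_sub _ _

namespace Matrix

variable {n : Type*} [Fintype n] [DecidableEq n]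

theorem adjugate_eq_det_smul_of_mul_eq_one {R : Type*} [CommRing R] {P Q : Matrix n n R}
    (h : Q * P = 1) : adjugate P = det P • Q := by
  calc adjugate P = Q * (P * adjugate P) := by rw [← Matrix.mul_assoc, h, Matrix.one_mul]
    _ = det P • Q := by rw [mul_adjugate, Matrix.mul_smul, Matrix.mul_one]

theorem adjugate_mul_mul_of_mul_eq_one {R : Type*} [CommRing R] {P Q : Matrix n n R}
    (h : P * Q = 1) (B : Matrix n n R) : adjugate (P * B * Q) = P * adjugate B * Q := by
  have hdet : det P * det Q = 1 := by rw [← det_mul, h, det_one]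
  rw [adjugate_mul_distrib, adjugate_mul_distrib, adjugate_eq_det_smul_of_mul_eq_one h,
    adjugate_eq_det_smul_of_mul_eq_one (mul_eq_one_comm.mp h)]
  simp only [Matrix.smul_mul, Matrix.mul_smul, smul_smul, hdet, one_smul, Matrix.mul_assoc]

theorem adjugate_scalar_sub_apply_self {R : Type*} [CommRing R] {m : ℕ}
    (A : Matrix (Fin (m + 1)) (Fin (m + 1)) R) (x : R) (j : Fin (m + 1)) :
    adjugate (scalar _ x - A) j j = (A.submatrix j.succAbove j.succAbove).charpoly.eval x := by
  rw [adjugate_fin_succ_eq_det_submatrix, eval_charpoly, Even.neg_one_pow ⟨j, rfl⟩, one_mul]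
  congr 1
  ext k l
  simp [scalar_apply, diagonal_apply]

namespace IsHermitian

variable {A : Matrix n n ℝ}

theorem scalar_sub_eq (hA : A.IsHermitian) (x : ℝ) :
    scalar n x - A = (hA.eigenvectorUnitary : Matrix n n ℝ) *
      diagonal (fun k => x - hA.eigenvalues k) * star (hA.eigenvectorUnitary : Matrix n n ℝ) := by
  set U := (hA.eigenvectorUnitary : Matrix n n ℝ)
  have hA' : A = U * diagonal hA.eigenvalues * star U := by
    simpa [Unitary.conjStarAlgAut_apply] using hA.spectral_theorem
  have hx : scalar n x = U * scalar n x * star U := by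
    rw [← (scalar_commute x (fun r => Commute.all _ _) U).eq, Matrix.mul_assoc,
      Unitary.mul_star_self_of_mem hA.eigenvectorUnitary.2, Matrix.mul_one]
  have hdiag : diagonal (fun k => x - hA.eigenvalues k) = scalar n x - diagonal hA.eigenvalues := by
    rw [scalar_apply, diagonal_sub]
  rw [hdiag, Matrix.mul_sub, Matrix.sub_mul, ← hA', ← hx]

theorem adjugate_scalar_sub_apply_self_eq_sum (hA : A.IsHermitian) (x : ℝ) (j : n) :
    (scalar n x - A).adjugate j j = ∑ k, (hA.eigenvectorUnitary : Matrix n n ℝ) j k ^ 2 *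
      ∏ l ∈ Finset.univ.erase k, (x - hA.eigenvalues l) := by
  rw [hA.scalar_sub_eq,
    adjugate_mul_mul_of_mul_eq_one (Unitary.mul_star_self_of_mem hA.eigenvectorUnitary.2),
    adjugate_diagonal, mul_apply]
  refine Finset.sum_congr rfl fun k _ => ?_
  simp only [mul_diagonal, eigenvectorUnitary_apply, star_apply, star_trivial]
  ring

theorem sq_apply_eq_eigenvectorUnitary_sq (hA : A.IsHermitian) {i : n}
    (hi : ∀ k ≠ i, hA.eigenvalues k ≠ hA.eigenvalues i) {v : n → ℝ}
    (hv : A *ᵥ v = hA.eigenvalues i • v) (hvn : ∑ j, v j ^ 2 = 1) (j : n) :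
    v j ^ 2 = (hA.eigenvectorUnitary : Matrix n n ℝ) j i ^ 2 := by
  set U := (hA.eigenvectorUnitary : Matrix n n ℝ)
  have hUU : U * star U = 1 := Unitary.mul_star_self_of_mem hA.eigenvectorUnitary.2
  have hdiag : star U * A * U = diagonal hA.eigenvalues := by
    simpa [Unitary.conjStarAlgAut_star_apply] using hA.conjStarAlgAut_star_eigenvectorUnitary
  set y := star U *ᵥ v with hy_def
  have hDy : diagonal hA.eigenvalues *ᵥ y = hA.eigenvalues i • y := by
    rw [← hdiag, hy_def, mulVec_mulVec, Matrix.mul_assoc (star U * A), hUU, Matrix.mul_one,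
      ← mulVec_mulVec, hv, mulVec_smul]
  have hy : ∀ k ≠ i, y k = 0 := by
    intro k hk
    have hyk := congrFun hDy k
    simp only [mulVec_diagonal, Pi.smul_apply, smul_eq_mul] at hyk
    have hyk' : (hA.eigenvalues k - hA.eigenvalues i) * y k = 0 := by linear_combination hyk
    exact (mul_eq_zero.mp hyk').resolve_left (sub_ne_zero.mpr (hi k hk))
  have hvU : v = U *ᵥ y := by rw [hy_def, mulVec_mulVec, hUU, one_mulVec]
  have hvj : ∀ j, v j = U j i * y i := by
    intro j
    rw [hvU, mulVec, dotProduct,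
      Finset.sum_eq_single i (fun k _ hk => by rw [hy k hk, mul_zero]) (by simp)]
  have hcol : ∑ j, U j i ^ 2 = 1 := by
    have := congrFun (congrFun (mem_unitaryGroup_iff'.mp hA.eigenvectorUnitary.2) i) i
    simpa [U, mul_apply, sq] using this
  have hyi : y i ^ 2 = 1 := by
    simpa [hvj, mul_pow, ← Finset.sum_mul, hcol] using hvn
  rw [hvj, mul_pow, hyi, mul_one]

theorem adjugate_scalar_sub_apply_self_of_count_eq_one (hA : A.IsHermitian) {x : ℝ}
    (hx : A.charpoly.roots.count x = 1) {v : n → ℝ} (hv : A *ᵥ v = x • v)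
    (hvn : ∑ j, v j ^ 2 = 1) (j : n) :
    (scalar n x - A).adjugate j j = ((A.charpoly.roots.erase x).map (x - ·)).prod * v j ^ 2 := by
  have hroots : A.charpoly.roots = Finset.univ.val.map hA.eigenvalues := by
    simpa using hA.roots_charpoly_eq_eigenvalues
  obtain ⟨i, hi⟩ : ∃ i, ∀ k, hA.eigenvalues k = x ↔ k = i := by
    rw [hroots, Multiset.count_map, Multiset.card_eq_one] at hx
    obtain ⟨i, hi⟩ := hx
    exact ⟨i, fun k => by simpa [eq_comm, Iff.comm] using congrArg (k ∈ ·) hi⟩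
  obtain rfl : hA.eigenvalues i = x := (hi i).mpr rfl
  have hsimple : ∀ k ≠ i, hA.eigenvalues k ≠ hA.eigenvalues i :=
    fun k hk h => hk ((hi k).mp h)
  rw [hA.adjugate_scalar_sub_apply_self_eq_sum, Finset.sum_eq_single i,
    hA.sq_apply_eq_eigenvectorUnitary_sq hsimple hv hvn, hroots,
    ← Multiset.map_erase_of_mem _ _ (Finset.mem_univ_val i), Multiset.map_map, mul_comm]
  · rfl
  · intro k _ hk
    rw [Finset.prod_eq_zero (Finset.mem_erase.mpr ⟨Ne.symm hk, Finset.mem_univ i⟩) (sub_self _),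
      mul_zero]
  · simp

theorem eval_charpoly_submatrix_succAbove {m : ℕ}
    {A : Matrix (Fin (m + 1)) (Fin (m + 1)) ℝ} (hA : A.IsHermitian) {x : ℝ}
    (hx : A.charpoly.roots.count x = 1) {v : Fin (m + 1) → ℝ} (hv : A *ᵥ v = x • v)
    (hvn : ∑ j, v j ^ 2 = 1) (j : Fin (m + 1)) :
    (A.submatrix j.succAbove j.succAbove).charpoly.eval x =
      ((A.charpoly.roots.erase x).map (x - ·)).prod * v j ^ 2 := by
  rw [← adjugate_scalar_sub_apply_self,
    hA.adjugate_scalar_sub_apply_self_of_count_eq_one hx hv hvn]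

end IsHermitian

end Matrix

theorem eigenvector_entries_of_symmetric_spectrum {d : ℕ}
    (M : Matrix (Fin (d + 1)) (Fin (d + 1)) ℝ) (hM : M.IsSymm)
    (hspec : M.charpoly.roots.map (fun x => -x) = M.charpoly.roots)
    (hsub : ∀ j : Fin (d + 1),
      ((M.submatrix j.succAbove j.succAbove).charpoly.roots).map (fun x => -x) =
        (M.submatrix j.succAbove j.succAbove).charpoly.roots)
    (a b : ℝ)
    (ha : a ∈ M.charpoly.roots ∧ (∀ r ∈ M.charpoly.roots, r ≤ a) ∧
      M.charpoly.roots.count a = 1)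
    (hb : b ∈ M.charpoly.roots ∧ (∀ r ∈ M.charpoly.roots, b ≤ r) ∧
      M.charpoly.roots.count b = 1)
    (v w : Fin (d + 1) → ℝ)
    (hv : M.mulVec v = a • v) (hw : M.mulVec w = b • w)
    (hvn : (∑ j, v j ^ 2) = 1) (hwn : (∑ j, w j ^ 2) = 1) :
    ∀ j, v j ^ 2 = w j ^ 2 := by
  have hH : M.IsHermitian := isHermitian_iff_isSymm.mpr hM
  have hneg : ∀ r ∈ M.charpoly.roots, -r ∈ M.charpoly.roots := fun r hr =>
    hspec ▸ Multiset.mem_map_of_mem _ hr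
  obtain rfl : b = -a := le_antisymm (hb.2.1 _ (hneg a ha.1))
    (neg_le.mpr (ha.2.1 _ (hneg b hb.1)))
  have hcard : Multiset.card (M.charpoly.roots.erase a) = d := by
    rw [Multiset.card_erase_of_mem ha.1, ← hH.splits_charpoly.natDegree_eq_card_roots,
      charpoly_natDegree_eq_dim, Fintype.card_fin, Nat.pred_succ]
  have hc : (-1 : ℝ) ^ d * ((M.charpoly.roots.erase a).map (a - ·)).prod ≠ 0 := by
    have ha_erase : a ∉ M.charpoly.roots.erase a := by
      rw [← Multiset.count_eq_zero, Multiset.count_erase_self, ha.2.2]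
    exact mul_ne_zero (pow_ne_zero _ (by norm_num))
      (Multiset.prod_ne_zero (by simpa [sub_eq_zero, eq_comm] using ha_erase))
  intro j
  have hq := (charpoly_monic _).eval_neg_of_roots_map_neg
    (hH.submatrix j.succAbove).splits_charpoly (hsub j) a
  rw [charpoly_natDegree_eq_dim, Fintype.card_fin,
    hH.eval_charpoly_submatrix_succAbove hb.2.2 hw hwn j,
    hH.eval_charpoly_submatrix_succAbove ha.2.2 hv hvn j,
    Multiset.prod_map_sub_erase_neg_of_map_neg_eq hspec, hcard, ← mul_assoc] at hq
  exact (mul_left_cancel₀ hc hq).symm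
end
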